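/- (Linear Gromov non-squeezing) Let R > r > 0. There is no affine symplectomorphism φ(z) = Az + b, with A ∈ Sp(2n,ℝ) and b ∈ ℝ^{2n}, mapping the open ball B(R) = {z ∈ ℝ^{2n} : |z|² < R²} into the cylinder Z(r) = {(x,p) ∈ ℝ^{2n} : x₁² + p₁² < r²}. -/

import Mathlib

/-!
If `u` and `v` are the rows of `A` giving the coordinates `x₁` and `p₁`, then `Aᵀ` is symplectic
as well, so `ω(u, v) = 1`. By Cauchy–Schwarz `|u| |v| ≥ 1`, hence one of them, say `u`, has
`|u| ≥ 1`. Moving `z` along `±u` to a radius `t ∈ (r, R)` inside the ball makes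
`|⟨u, z⟩ + b₁| ≥ t |u| > r`, so the image of `z` leaves the cylinder.
-/

open Matrix MeasureTheory BigOperators

noncomputable def stdJ (n : ℕ) : Matrix (Fin n ⊕ Fin n) (Fin n ⊕ Fin n) ℝ :=
  Matrix.fromBlocks 0 1 (-1) 0

def IsSymplectic {n : ℕ} (S : Matrix (Fin n ⊕ Fin n) (Fin n ⊕ Fin n) ℝ) : Prop :=
  Sᵀ * stdJ n * S = stdJ n

def IsWilliamsonEigs {n : ℕ} (M : Matrix (Fin n ⊕ Fin n) (Fin n ⊕ Fin n) ℝ)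
    (lam : Fin n → ℝ) : Prop :=
  (∀ i, 0 < lam i) ∧ ∃ S : Matrix (Fin n ⊕ Fin n) (Fin n ⊕ Fin n) ℝ, IsSymplectic S ∧
    Sᵀ * M * S = Matrix.fromBlocks (Matrix.diagonal lam) 0 0 (Matrix.diagonal lam)

section DotProduct

variable {ι : Type*} [Fintype ι]

theorem dotProduct_self_eq_sum_sq {R : Type*} [Semiring R] (v : ι → R) :
    v ⬝ᵥ v = ∑ i, v i ^ 2 := by
  simp only [dotProduct, sq]

theorem dotProduct_self_nonneg {R : Type*} [Ring R] [LinearOrder R] [IsStrictOrderedRing R]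
    (v : ι → R) : 0 ≤ v ⬝ᵥ v :=
  Finset.sum_nonneg fun i _ => mul_self_nonneg (v i)

theorem sq_dotProduct_le_mul_dotProduct_self {R : Type*} [CommRing R] [LinearOrder R]
    [IsStrictOrderedRing R] (u w : ι → R) : (u ⬝ᵥ w) ^ 2 ≤ (u ⬝ᵥ u) * (w ⬝ᵥ w) := by
  rw [dotProduct_self_eq_sum_sq, dotProduct_self_eq_sum_sq]
  exact Finset.sum_mul_sq_le_sq_mul_sq Finset.univ u w

theorem exists_dotProduct_self_le_and_le_sq_dotProduct_add (u : ι → ℝ) (c : ℝ) {t : ℝ}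
    (ht : 0 ≤ t) : ∃ z : ι → ℝ, z ⬝ᵥ z ≤ t ^ 2 ∧ t ^ 2 * (u ⬝ᵥ u) ≤ (u ⬝ᵥ z + c) ^ 2 := by
  set s := √(u ⬝ᵥ u)
  have hs : 0 ≤ s := Real.sqrt_nonneg _
  have hs2 : s ^ 2 = u ⬝ᵥ u := Real.sq_sqrt (dotProduct_self_nonneg u)
  set w := (t / s) • u
  have hw : w ⬝ᵥ w ≤ t ^ 2 := by
    rcases hs.eq_or_lt with h | h
    · simpa [w, ← h] using sq_nonneg t
    · rw [dotProduct_smul, smul_dotProduct, ← hs2, smul_eq_mul, smul_eq_mul]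
      exact le_of_eq (by field_simp)
  have huw : u ⬝ᵥ w = t * s := by
    rcases hs.eq_or_lt with h | h
    · simp [w, ← h]
    · rw [dotProduct_smul, ← hs2, smul_eq_mul]
      field_simp
  rw [← hs2]
  rcases le_total 0 c with hc | hc
  · refine ⟨w, hw, ?_⟩
    rw [huw]
    nlinarith [mul_nonneg ht hs]
  · refine ⟨-w, by simpa using hw, ?_⟩
    rw [dotProduct_neg, huw]
    nlinarith [mul_nonneg ht hs]

theorem exists_dotProduct_self_lt_and_lt_sq_dotProduct_add {u : ι → ℝ} (hu : 1 ≤ u ⬝ᵥ u)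
    (c : ℝ) {r R : ℝ} (hr : 0 ≤ r) (hR : r < R) :
    ∃ z : ι → ℝ, z ⬝ᵥ z < R ^ 2 ∧ r ^ 2 < (u ⬝ᵥ z + c) ^ 2 := by
  obtain ⟨z, hz, huz⟩ := exists_dotProduct_self_le_and_le_sq_dotProduct_add u c
    (t := (r + R) / 2) (by linarith)
  exact ⟨z, by nlinarith, by nlinarith⟩

end DotProduct

section Symplectic

variable {n : ℕ}

theorem stdJ_eq_neg_J (n : ℕ) : stdJ n = -J (Fin n) ℝ := by
  simp [stdJ, J, fromBlocks_neg]

theorem transpose_stdJ_mul_stdJ (n : ℕ) : (stdJ n)ᵀ * stdJ n = 1 := by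
  rw [stdJ_eq_neg_J, transpose_neg, J_transpose, neg_neg, mul_neg, J_squared, neg_neg]

theorem stdJ_mulVec_dotProduct_self (w : Fin n ⊕ Fin n → ℝ) :
    (stdJ n *ᵥ w) ⬝ᵥ (stdJ n *ᵥ w) = w ⬝ᵥ w := by
  rw [dotProduct_mulVec, ← mulVec_transpose, mulVec_mulVec, transpose_stdJ_mul_stdJ,
    one_mulVec, dotProduct_comm]

theorem isSymplectic_iff_mem_symplecticGroup {A : Matrix (Fin n ⊕ Fin n) (Fin n ⊕ Fin n) ℝ} :
    IsSymplectic A ↔ A ∈ symplecticGroup (Fin n) ℝ := by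
  rw [SymplecticGroup.mem_iff', IsSymplectic, stdJ_eq_neg_J, mul_neg, neg_mul, neg_inj]

theorem IsSymplectic.transpose {A : Matrix (Fin n ⊕ Fin n) (Fin n ⊕ Fin n) ℝ}
    (hA : IsSymplectic A) : IsSymplectic Aᵀ :=
  isSymplectic_iff_mem_symplecticGroup.2 <|
    SymplecticGroup.transpose_mem <| isSymplectic_iff_mem_symplecticGroup.1 hA

theorem mul_mul_transpose_apply {m l α : Type*} [Fintype l] [NonUnitalSemiring α]
    (B : Matrix m l α) (M : Matrix l l α) (i j : m) :
    (B * M * Bᵀ) i j = B i ⬝ᵥ (M *ᵥ B j) := by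
  rw [Matrix.mul_assoc]
  rfl

theorem IsSymplectic.one_le_dotProduct_self_inl_or_inr
    {A : Matrix (Fin n ⊕ Fin n) (Fin n ⊕ Fin n) ℝ} (hA : IsSymplectic A) (i : Fin n) :
    1 ≤ A (.inl i) ⬝ᵥ A (.inl i) ∨ 1 ≤ A (.inr i) ⬝ᵥ A (.inr i) := by
  have hω : A (.inl i) ⬝ᵥ (stdJ n *ᵥ A (.inr i)) = 1 := by
    have h := congrFun (congrFun hA.transpose (.inl i)) (.inr i)
    rw [transpose_transpose] at h
    rw [← mul_mul_transpose_apply, h]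
    simp [stdJ]
  have hprod : 1 ≤ (A (.inl i) ⬝ᵥ A (.inl i)) * (A (.inr i) ⬝ᵥ A (.inr i)) :=
    calc 1 = (A (.inl i) ⬝ᵥ (stdJ n *ᵥ A (.inr i))) ^ 2 := by rw [hω, one_pow]
      _ ≤ _ := sq_dotProduct_le_mul_dotProduct_self _ _
      _ = _ := by rw [stdJ_mulVec_dotProduct_self]
  by_contra! h
  nlinarith [dotProduct_self_nonneg (A (.inl i)), dotProduct_self_nonneg (A (.inr i))]

end Symplectic

theorem linear_gromov_nonsqueezing {n : ℕ} (hn : 0 < n) (R r : ℝ)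
    (hr : 0 < r) (hR : r < R) :
    ¬ ∃ (A : Matrix (Fin n ⊕ Fin n) (Fin n ⊕ Fin n) ℝ) (b : (Fin n ⊕ Fin n) → ℝ),
        IsSymplectic A ∧
        ∀ z : (Fin n ⊕ Fin n) → ℝ, (∑ i, z i ^ 2) < R ^ 2 →
          (A.mulVec z + b) (Sum.inl ⟨0, hn⟩) ^ 2
            + (A.mulVec z + b) (Sum.inr ⟨0, hn⟩) ^ 2 < r ^ 2 := by
  rintro ⟨A, b, hA, H⟩
  have escape : ∀ k, 1 ≤ A k ⬝ᵥ A k →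
      ∃ z, (∑ i, z i ^ 2) < R ^ 2 ∧ r ^ 2 < (A *ᵥ z + b) k ^ 2 := fun k hk => by
    obtain ⟨z, hz, hlt⟩ := exists_dotProduct_self_lt_and_lt_sq_dotProduct_add hk (b k) hr.le hR
    exact ⟨z, by rwa [← dotProduct_self_eq_sum_sq], hlt⟩
  rcases hA.one_le_dotProduct_self_inl_or_inr ⟨0, hn⟩ with hk | hk
  · obtain ⟨z, hz, hlt⟩ := escape _ hk
    linarith [H z hz, sq_nonneg ((A *ᵥ z + b) (.inr ⟨0, hn⟩))]
  · obtain ⟨z, hz, hlt⟩ := escape _ hk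
    linarith [H z hz, sq_nonneg ((A *ᵥ z + b) (.inl ⟨0, hn⟩))]
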